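/- arXiv:1708.09741 — 9 statements merged into one kernel-verified Lean document; each statement's English description precedes it below -/
import Mathlib

section
/- Let X be a nonzero real Hilbert space and let G : X → X be a continuous, invertible, positive definite linear operator. Then a nonempty subset C ⊆ X satisfies C = (GC)° if and only if C = {x ∈ X : ⟨Gx, x⟩ ≤ 1}. In particular, the equation C = (GC)° has a unique nonempty solution, and this solution is the ellipsoid {x ∈ X : ⟨Gx, x⟩ ≤ 1}. -/
open scoped RealInnerProductSpace

/-- The polar of a subset `C` of a real inner product space. -/
def polarSet {X : Type*} [NormedAddCommGroup X] [InnerProductSpace ℝ X]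
    (C : Set X) : Set X :=
  {y : X | ∀ c ∈ C, ⟪y, c⟫ ≤ 1}

/-!
For a positive operator `T`, the form `⟪T x, y⟫` is a semi-inner product whose unit ball is the
ellipsoid `E = {x | ⟪T x, x⟫ ≤ 1}`. Expanding `0 ≤ ⟪T (x - y), x - y⟫` gives `E ⊆ (T E)°`, and
testing `y ∈ (T E)°` against the rescaled point `y / √⟪T y, y⟫ ∈ E` gives `(T E)° ⊆ E`.
Now if `C = (T C)°`, then `⟪c, T c⟫ ≤ 1` for `c ∈ C`, so `C ⊆ E`, and by antitonicity of the
polar `E = (T E)° ⊆ (T C)° = C`.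
-/

section

variable {X : Type*} [NormedAddCommGroup X] [InnerProductSpace ℝ X]

theorem polarSet_anti : Antitone (polarSet : Set X → Set X) :=
  fun _ _ hst _ hy c hc => hy c (hst hc)

theorem LinearMap.inner_self_le_one_of_forall_inner_le_one (T : X →ₗ[ℝ] X) {y : X}
    (h : ∀ z, ⟪T z, z⟫ ≤ 1 → ⟪y, T z⟫ ≤ 1) : ⟪T y, y⟫ ≤ 1 := by
  set a := ⟪T y, y⟫
  by_contra! ha
  have hs : 1 < √a := Real.lt_sqrt_of_sq_lt (by linarith)
  have hs_sq : √a ^ 2 = a := Real.sq_sqrt (by linarith)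
  have hz : ⟪T ((√a)⁻¹ • y), (√a)⁻¹ • y⟫ = 1 := by
    rw [map_smul, real_inner_smul_left, real_inner_smul_right]
    field_simp
    exact hs_sq.symm
  have hyz : ⟪y, T ((√a)⁻¹ • y)⟫ = √a := by
    rw [map_smul, real_inner_smul_right, real_inner_comm]
    field_simp
    exact hs_sq.symm
  linarith [hyz ▸ h _ hz.le]

namespace LinearMap.IsPositive

variable {T : X →ₗ[ℝ] X} (hT : T.IsPositive)
include hT

theorem inner_le_one_of_inner_self_le_one {x y : X} (hx : ⟪T x, x⟫ ≤ 1) (hy : ⟪T y, y⟫ ≤ 1) :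
    ⟪T x, y⟫ ≤ 1 := by
  have hsymm : ⟪T y, x⟫ = ⟪T x, y⟫ := by rw [hT.isSymmetric, real_inner_comm]
  have hexpand : ⟪T (x - y), x - y⟫ = ⟪T x, x⟫ - 2 * ⟪T x, y⟫ + ⟪T y, y⟫ := by
    simp only [map_sub, inner_sub_left, inner_sub_right, hsymm]
    ring
  linarith [hT.inner_nonneg_left (x - y)]

theorem polarSet_image_ellipsoid :
    polarSet (T '' {x | ⟪T x, x⟫ ≤ 1}) = {x | ⟪T x, x⟫ ≤ 1} := by
  ext y
  constructor
  · intro hy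
    exact T.inner_self_le_one_of_forall_inner_le_one fun z hz => hy _ ⟨z, hz, rfl⟩
  · rintro hy _ ⟨z, hz, rfl⟩
    rw [real_inner_comm]
    exact hT.inner_le_one_of_inner_self_le_one hz hy

theorem eq_polarSet_image_iff {C : Set X} :
    C = polarSet (T '' C) ↔ C = {x | ⟪T x, x⟫ ≤ 1} := by
  constructor
  · intro hC
    have hC_sub : C ⊆ {x | ⟪T x, x⟫ ≤ 1} := by
      intro c hc
      have hc_polar : c ∈ polarSet (T '' C) := hC ▸ hc
      rw [Set.mem_ofPred_eq, real_inner_comm]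
      exact hc_polar _ ⟨c, hc, rfl⟩
    refine hC_sub.antisymm ?_
    calc {x | ⟪T x, x⟫ ≤ 1} = polarSet (T '' {x | ⟪T x, x⟫ ≤ 1}) :=
          hT.polarSet_image_ellipsoid.symm
      _ ⊆ polarSet (T '' C) := polarSet_anti (Set.image_mono hC_sub)
      _ = C := hC.symm
  · rintro rfl
    exact hT.polarSet_image_ellipsoid.symm

end LinearMap.IsPositive

end

theorem stmt1_general {X : Type*} [NormedAddCommGroup X] [InnerProductSpace ℝ X]
    [CompleteSpace X] (G : X ≃L[ℝ] X)
    (hsa : IsSelfAdjoint (G : X →L[ℝ] X))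
    (hpd : ∀ x : X, x ≠ 0 → 0 < ⟪G x, x⟫)
    (C : Set X) :
    C = polarSet ((G : X → X) '' C) ↔ C = {x : X | ⟪G x, x⟫ ≤ 1} := by
  have hG : ((G : X →L[ℝ] X) : X →ₗ[ℝ] X).IsPositive := by
    refine (LinearMap.isPositive_iff _).mpr
      ⟨ContinuousLinearMap.isSelfAdjoint_iff_isSymmetric.mp hsa, fun x => ?_⟩
    rcases eq_or_ne x 0 with rfl | hx
    · simp
    · exact (hpd x hx).le
  exact hG.eq_polarSet_image_iff

/-- If `G` is a continuous, invertible, positive definite linear operator on a nonzero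
real Hilbert space `X`, then a nonempty subset `C ⊆ X` satisfies `C = (GC)°` iff
`C = {x | ⟪Gx, x⟫ ≤ 1}`; in particular, this ellipsoid is the unique nonempty solution. -/
theorem stmt1 {X : Type*} [NormedAddCommGroup X] [InnerProductSpace ℝ X]
    [CompleteSpace X] [Nontrivial X] (G : X ≃L[ℝ] X)
    (hsa : IsSelfAdjoint (G : X →L[ℝ] X))
    (hpd : ∀ x : X, x ≠ 0 → 0 < ⟪G x, x⟫)
    (C : Set X) (hne : C.Nonempty) :
    C = polarSet ((G : X → X) '' C) ↔ C = {x : X | ⟪G x, x⟫ ≤ 1} :=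
  stmt1_general G hsa hpd C
end

section
/- Let X be a nonzero real Banach space and let A : X → X* be a continuous linear operator which is symmetric (⟨Ax, y⟩ = ⟨x, Ay⟩ for all x, y ∈ X), satisfies ⟨Ax, x⟩ ≥ 0 for all x ∈ X, and is invertible with continuous inverse A⁻¹ : X* → X. Then ⟨Ax, x⟩ ≥ ‖A⁻¹‖⁻¹·‖x‖² for every x ∈ X, and ‖A⁻¹‖⁻¹ is the largest possible coercivity coefficient: if β > 0 satisfies β‖x‖² ≤ ⟨Ax, x⟩ for all x ∈ X, then β ≤ ‖A⁻¹‖⁻¹. -/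
/-!
Let `B = A⁻¹`. For `x ∈ X` pick `f ∈ X*` with `‖f‖ ≤ 1` and `f x = ‖x‖`. Symmetry gives
`f x = ⟨Ax, Bf⟩`, so Cauchy–Schwarz for the positive semidefinite form `⟨A·, ·⟩` yields
`‖x‖² ≤ ⟨Ax, x⟩ ⟨f, Bf⟩ ≤ ‖B‖ ⟨Ax, x⟩`. Conversely, coercivity with constant `β` gives
`β ‖y‖² ≤ ⟨Ay, y⟩ ≤ ‖Ay‖ ‖y‖`, i.e. `β ‖Bf‖ ≤ ‖f‖`, whence `‖B‖ ≤ β⁻¹`.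
-/

namespace ContinuousLinearMap

variable {X : Type*} [NormedAddCommGroup X] [NormedSpace ℝ X]

theorem sq_apply_le_apply_self_mul_apply_self (A : X →L[ℝ] StrongDual ℝ X)
    (hsym : ∀ x y : X, A x y = A y x) (hpos : ∀ x : X, 0 ≤ A x x) (x y : X) :
    (A x y) ^ 2 ≤ A x x * A y y :=
  LinearMap.BilinForm.apply_sq_le_of_symm A.toLinearMap₁₂ hpos ⟨fun x y => hsym x y⟩ x y

theorem apply_apply_self_le_opNorm_mul_sq (B : StrongDual ℝ X →L[ℝ] X) (f : StrongDual ℝ X) :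
    f (B f) ≤ ‖B‖ * ‖f‖ ^ 2 :=
  calc f (B f) ≤ ‖f‖ * ‖B f‖ := (le_abs_self _).trans (f.le_opNorm _)
    _ ≤ ‖f‖ * (‖B‖ * ‖f‖) := by gcongr; exact B.le_opNorm f
    _ = ‖B‖ * ‖f‖ ^ 2 := by ring

theorem mul_norm_le_norm_apply_of_coercive (A : X →L[ℝ] StrongDual ℝ X) {β : ℝ}
    (hcoer : ∀ x : X, β * ‖x‖ ^ 2 ≤ A x x) (x : X) : β * ‖x‖ ≤ ‖A x‖ := by
  rcases (norm_nonneg x).eq_or_lt with hx | hx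
  · rw [← hx, mul_zero]
    exact norm_nonneg _
  · refine le_of_mul_le_mul_right ?_ hx
    calc β * ‖x‖ * ‖x‖ = β * ‖x‖ ^ 2 := by ring
      _ ≤ A x x := hcoer x
      _ ≤ ‖A x‖ * ‖x‖ := (le_abs_self _).trans ((A x).le_opNorm x)

end ContinuousLinearMap

namespace ContinuousLinearEquiv

open ContinuousLinearMap

variable {X : Type*} [NormedAddCommGroup X] [NormedSpace ℝ X]

theorem norm_sq_le_opNorm_symm_mul_apply_self (A : X ≃L[ℝ] StrongDual ℝ X)
    (hsym : ∀ x y : X, A x y = A y x) (hpos : ∀ x : X, 0 ≤ A x x) (x : X) :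
    ‖x‖ ^ 2 ≤ ‖(A.symm : StrongDual ℝ X →L[ℝ] X)‖ * A x x := by
  set B : StrongDual ℝ X →L[ℝ] X := (A.symm : StrongDual ℝ X →L[ℝ] X)
  obtain ⟨f, hf, hfx⟩ := exists_dual_vector'' ℝ x
  have hAB : A (B f) = f := A.apply_symm_apply f
  calc ‖x‖ ^ 2 = (A x (B f)) ^ 2 := by rw [hsym, hAB, hfx]; rfl
    _ ≤ A x x * A (B f) (B f) :=
      sq_apply_le_apply_self_mul_apply_self (A : X →L[ℝ] StrongDual ℝ X) hsym hpos x (B f)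
    _ ≤ A x x * (‖B‖ * ‖f‖ ^ 2) := by
      rw [hAB]; exact mul_le_mul_of_nonneg_left (B.apply_apply_self_le_opNorm_mul_sq f) (hpos x)
    _ ≤ A x x * ‖B‖ := by
      gcongr
      · exact hpos x
      · exact mul_le_of_le_one_right (norm_nonneg B) (pow_le_one₀ (norm_nonneg f) hf)
    _ = ‖B‖ * A x x := mul_comm _ _

theorem opNorm_symm_le_inv_of_coercive (A : X ≃L[ℝ] StrongDual ℝ X) {β : ℝ} (hβ : 0 < β)
    (hcoer : ∀ x : X, β * ‖x‖ ^ 2 ≤ A x x) :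
    ‖(A.symm : StrongDual ℝ X →L[ℝ] X)‖ ≤ β⁻¹ := by
  refine opNorm_le_bound _ (inv_nonneg.2 hβ.le) fun f => ?_
  have h := (A : X →L[ℝ] StrongDual ℝ X).mul_norm_le_norm_apply_of_coercive hcoer (A.symm f)
  rw [coe_coe, apply_symm_apply] at h
  rw [inv_mul_eq_div, le_div_iff₀' hβ]
  exact h

end ContinuousLinearEquiv

theorem stmt6_general {X : Type*} [NormedAddCommGroup X] [NormedSpace ℝ X]
    [Nontrivial X]
    (A : X ≃L[ℝ] StrongDual ℝ X)
    (hsym : ∀ x y : X, A x y = A y x)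
    (hpos : ∀ x : X, 0 ≤ A x x) :
    (∀ x : X, ‖(A.symm : StrongDual ℝ X →L[ℝ] X)‖⁻¹ * ‖x‖ ^ 2 ≤ A x x) ∧
    ∀ β : ℝ, 0 < β → (∀ x : X, β * ‖x‖ ^ 2 ≤ A x x) →
      β ≤ ‖(A.symm : StrongDual ℝ X →L[ℝ] X)‖⁻¹ := by
  have hB := A.norm_symm_pos
  refine ⟨fun x => ?_, fun β hβ hcoer => ?_⟩
  · rw [inv_mul_le_iff₀ hB]
    exact A.norm_sq_le_opNorm_symm_mul_apply_self hsym hpos x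
  · exact (le_inv_comm₀ hβ hB).2 (A.opNorm_symm_le_inv_of_coercive hβ hcoer)

/-- Generalized converse of the Lax–Milgram theorem: if `X` is a nonzero real Banach
space and `A : X → X*` is a continuous linear operator which is symmetric, positive
semidefinite and invertible with continuous inverse, then
`⟪Ax, x⟫ ≥ ‖A⁻¹‖⁻¹·‖x‖²` for all `x`, and `‖A⁻¹‖⁻¹` is the largest possible
coercivity coefficient. -/
theorem stmt6 {X : Type*} [NormedAddCommGroup X] [NormedSpace ℝ X]
    [CompleteSpace X] [Nontrivial X]
    (A : X ≃L[ℝ] StrongDual ℝ X)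
    (hsym : ∀ x y : X, A x y = A y x)
    (hpos : ∀ x : X, 0 ≤ A x x) :
    (∀ x : X, ‖(A.symm : StrongDual ℝ X →L[ℝ] X)‖⁻¹ * ‖x‖ ^ 2 ≤ A x x) ∧
    ∀ β : ℝ, 0 < β → (∀ x : X, β * ‖x‖ ^ 2 ≤ A x x) →
      β ≤ ‖(A.symm : StrongDual ℝ X →L[ℝ] X)‖⁻¹ :=
  stmt6_general A hsym hpos
end

section
/- Let X be a nonzero real Hilbert space, let A : X → X be a positive definite and invertible continuous linear operator, and let D := {x ∈ X : ⟨Ax, x⟩ ≤ 1}. Then the polar of D is the ellipsoid induced by A⁻¹: D° = {x ∈ X : ⟨A⁻¹x, x⟩ ≤ 1}. -/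
open scoped RealInnerProductSpace

/-- The polar of the ellipsoid `D = {x | ⟪Ax, x⟫ ≤ 1}` induced by a positive definite
and invertible continuous linear operator `A` is the ellipsoid induced by `A⁻¹`:
`D° = {x | ⟪A⁻¹x, x⟫ ≤ 1}`. -/
theorem stmt9 {X : Type*} [NormedAddCommGroup X] [InnerProductSpace ℝ X]
    [CompleteSpace X] [Nontrivial X] (A : X ≃L[ℝ] X)
    (hsa : IsSelfAdjoint (A : X →L[ℝ] X))
    (hpd : ∀ x : X, x ≠ 0 → 0 < ⟪A x, x⟫) :
    polarSet {x : X | ⟪A x, x⟫ ≤ 1} = {x : X | ⟪A.symm x, x⟫ ≤ 1} := by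
  have symm : ∀ u v : X, ⟪A u, v⟫ = ⟪A v, u⟫ := fun u v => by
    have := hsa.isSymmetric u v
    simp only [ContinuousLinearMap.coe_coe] at this
    exact this.trans (real_inner_comm _ _)
  have hnn : ∀ x : X, 0 ≤ ⟪A x, x⟫ := by
    intro x
    by_cases hx : x = 0
    · simp [hx]
    · exact (hpd x hx).le
  have CS : ∀ u v : X, ⟪A u, v⟫ ^ 2 ≤ ⟪A u, u⟫ * ⟪A v, v⟫ := by
    intro u v
    by_cases hv : v = 0
    · simp [hv, hnn u]
    · have hvv : 0 < ⟪A v, v⟫ := hpd v hv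
      have key : 0 ≤ ⟪A (u + (-(⟪A u, v⟫ / ⟪A v, v⟫)) • v),
          u + (-(⟪A u, v⟫ / ⟪A v, v⟫)) • v⟫ := hnn _
      set t : ℝ := -(⟪A u, v⟫ / ⟪A v, v⟫)
      have expand : ⟪A (u + t • v), u + t • v⟫ =
          ⟪A u, u⟫ + 2 * t * ⟪A u, v⟫ + t ^ 2 * ⟪A v, v⟫ := by
        simp only [map_add, map_smul, inner_add_left, inner_add_right,
          real_inner_smul_left, real_inner_smul_right]
        rw [symm v u]
        ring
      rw [expand] at key
      have e2 : ⟪A u, u⟫ + 2 * t * ⟪A u, v⟫ + t ^ 2 * ⟪A v, v⟫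
          = ⟪A u, u⟫ - ⟪A u, v⟫ ^ 2 / ⟪A v, v⟫ := by
        show ⟪A u, u⟫ + 2 * (-(⟪A u, v⟫ / ⟪A v, v⟫)) * ⟪A u, v⟫
            + (-(⟪A u, v⟫ / ⟪A v, v⟫)) ^ 2 * ⟪A v, v⟫
            = ⟪A u, u⟫ - ⟪A u, v⟫ ^ 2 / ⟪A v, v⟫
        field_simp
        ring
      rw [e2, sub_nonneg, div_le_iff₀ hvv] at key
      linarith
  ext y
  simp only [polarSet, Set.mem_setOf_eq]
  have hAy : A (A.symm y) = y := A.apply_symm_apply y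
  have hAsy : ⟪A (A.symm y), A.symm y⟫ = ⟪A.symm y, y⟫ := by
    rw [hAy, real_inner_comm]
  constructor
  · intro hy
    by_cases hy0 : y = 0
    · simp [hy0]
    · have hu0 : A.symm y ≠ 0 := by
        intro h
        apply hy0
        rw [← hAy, h, map_zero]
      have ht : 0 < ⟪A.symm y, y⟫ := by
        rw [← hAsy]; exact hpd _ hu0
      set t : ℝ := ⟪A.symm y, y⟫ with htdef
      set s : ℝ := Real.sqrt t with hsdef
      have hs : 0 < s := Real.sqrt_pos.2 ht
      have hs2 : s ^ 2 = t := Real.sq_sqrt ht.le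
      have hx : ⟪A (s⁻¹ • A.symm y), s⁻¹ • A.symm y⟫ ≤ 1 := by
        rw [map_smul, real_inner_smul_left, real_inner_smul_right, hAsy]
        rw [show s⁻¹ * (s⁻¹ * t) = t / s ^ 2 by rw [sq]; field_simp, hs2,
          div_self ht.ne']
      have := hy _ hx
      rw [real_inner_smul_right, real_inner_comm] at this
      have hst : s⁻¹ * ⟪A.symm y, y⟫ = s := by
        rw [← htdef, ← hs2, sq]; field_simp
      rw [hst] at this
      nlinarith [this, hs, hs2]
  · intro hy x hx
    have h1 : ⟪y, x⟫ = ⟪A (A.symm y), x⟫ := by rw [hAy]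
    have h2 := CS (A.symm y) x
    rw [hAsy] at h2
    have hxx := hnn x
    have hyy : 0 ≤ ⟪A.symm y, y⟫ := by rw [← hAsy]; exact hnn _
    rw [h1]
    nlinarith [h2, hx, hxx, hyy, hy]
end

section
/- Let X be a nonzero real Hilbert space and let G : X → X be a continuous and invertible linear operator. If C ∈ 𝒦ᵦ₀(X) satisfies C = (GC)°, then the function f := (1/2)M_C² satisfies f(x) = f*(G*x) for every x ∈ X; that is, (1/2)M_C(x)² = sup{⟨G*x, y⟩ − (1/2)M_C(y)² : y ∈ X} for every x ∈ X. -/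
open scoped RealInnerProductSpace

/-- `𝒦ᵦ₀(X)`: bounded, closed, convex subsets of `X` containing `0` in their interior. -/
def Kb0 {X : Type*} [NormedAddCommGroup X] [InnerProductSpace ℝ X] (C : Set X) : Prop :=
  Bornology.IsBounded C ∧ IsClosed C ∧ Convex ℝ C ∧ (0 : X) ∈ interior C

/-- If `C ∈ 𝒦ᵦ₀(X)` solves `C = (GC)°`, then `f := (1/2)M_C²` satisfies
`f(x) = f*(G*x)` for all `x`, i.e.
`(1/2)M_C(x)² = sup_y (⟪G*x, y⟫ − (1/2)M_C(y)²)`. -/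
theorem stmt11 {X : Type*} [NormedAddCommGroup X] [InnerProductSpace ℝ X]
    [CompleteSpace X] [Nontrivial X] (G : X ≃L[ℝ] X) (C : Set X) (hC : Kb0 C)
    (hfix : C = polarSet ((G : X → X) '' C)) :
    ∀ x : X, (1 / 2 : ℝ) * gauge C x ^ 2 =
      ⨆ y : X, ⟪ContinuousLinearMap.adjoint (G : X →L[ℝ] X) x, y⟫ -
        (1 / 2 : ℝ) * gauge C y ^ 2 := by
  obtain ⟨hbdd, hcl, hconv, h0⟩ := hC
  have hCnhds : C ∈ nhds (0 : X) := mem_interior_iff_mem_nhds.mp h0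
  have habs : Absorbent ℝ C := absorbent_nhds_zero hCnhds
  -- pairing bound on C × C
  have hCC : ∀ u ∈ C, ∀ v ∈ C, ⟪u, (G : X → X) v⟫ ≤ 1 := by
    intro u hu v hv
    have hu' : u ∈ polarSet ((G : X → X) '' C) := hfix ▸ hu
    exact hu' _ ⟨v, hv, rfl⟩
  -- general Cauchy–Schwarz-type bound
  have key1 : ∀ u v : X, ⟪u, (G : X → X) v⟫ ≤ gauge C u * gauge C v := by
    intro u v
    have hε : ∀ ε > (0 : ℝ), ⟪u, (G : X → X) v⟫ ≤ (gauge C u + ε) * (gauge C v + ε) := by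
      intro ε hε
      obtain ⟨a, ha0, haa, hau⟩ := exists_lt_of_gauge_lt habs
        (show gauge C u < gauge C u + ε by linarith)
      obtain ⟨b, hb0, hbb, hbv⟩ := exists_lt_of_gauge_lt habs
        (show gauge C v < gauge C v + ε by linarith)
      obtain ⟨u', hu', huu⟩ := hau
      obtain ⟨v', hv', hvv⟩ := hbv
      have huu' : a • u' = u := huu
      have hvv' : b • v' = v := hvv
      have h1 : ⟪u', (G : X → X) v'⟫ ≤ 1 := hCC u' hu' v' hv'
      have hmap : (G : X → X) (b • v') = b • (G : X → X) v' := by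
        exact map_smul (G : X →L[ℝ] X) b v'
      have heq : ⟪u, (G : X → X) v⟫ = a * b * ⟪u', (G : X → X) v'⟫ := by
        rw [← huu', ← hvv', hmap, real_inner_smul_left, real_inner_smul_right]; ring
      rw [heq]
      have hab : a * b * ⟪u', (G : X → X) v'⟫ ≤ a * b := by
        nlinarith [mul_pos ha0 hb0]
      have hge : gauge C u ≥ 0 := gauge_nonneg u
      have hge' : gauge C v ≥ 0 := gauge_nonneg v
      nlinarith [mul_pos ha0 hb0]
    by_contra h
    push_neg at h
    set L := ⟪u, (G : X → X) v⟫ with hL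
    have hgu := gauge_nonneg (s := C) u
    have hgv := gauge_nonneg (s := C) v
    -- choose ε small enough for contradiction
    set d := L - gauge C u * gauge C v with hd
    have hd0 : 0 < d := by simpa [hd] using sub_pos.mpr h
    set ε := min 1 (d / (2 * (gauge C u + gauge C v + 1))) with hεdef
    have hden : 0 < gauge C u + gauge C v + 1 := by linarith
    have hden2 : 0 < 2 * (gauge C u + gauge C v + 1) := by linarith
    have hε0 : 0 < ε := lt_min one_pos (div_pos hd0 hden2)
    have hmain := hε ε hε0
    have hε1 : ε ≤ 1 := min_le_left _ _
    have hε2 : ε ≤ d / (2 * (gauge C u + gauge C v + 1)) := min_le_right _ _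
    have hε3 : ε * (2 * (gauge C u + gauge C v + 1)) ≤ d := by
      rw [le_div_iff₀ hden2] at hε2
      exact hε2
    have hεsq : ε * ε ≤ ε := by nlinarith
    nlinarith [hmain, hε3, hεsq]
  -- lower bound machinery: witnesses in C with large pairing
  have key2 : ∀ x : X, ∀ s : ℝ, 0 < s → s < gauge C x →
      ∃ c ∈ C, s < ⟪x, (G : X → X) c⟫ := by
    intro x s hs hsx
    by_contra h
    push_neg at h
    have hmem : s⁻¹ • x ∈ C := by
      rw [hfix]
      rintro _ ⟨c, hc, rfl⟩
      have := h c hc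
      rw [real_inner_smul_left]
      have : s⁻¹ * ⟪x, (G : X → X) c⟫ ≤ s⁻¹ * s :=
        mul_le_mul_of_nonneg_left this (inv_nonneg.mpr hs.le)
      rwa [inv_mul_cancel₀ hs.ne'] at this
    have : gauge C x ≤ s := by
      have h1 : gauge C (s⁻¹ • x) ≤ 1 := gauge_le_one_of_mem hmem
      have h2 : gauge C (s • s⁻¹ • x) = s * gauge C (s⁻¹ • x) :=
        gauge_smul_of_nonneg hs.le _
      rw [smul_smul, mul_inv_cancel₀ hs.ne', one_smul] at h2
      calc gauge C x = s * gauge C (s⁻¹ • x) := h2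
        _ ≤ s * 1 := mul_le_mul_of_nonneg_left h1 hs.le
        _ = s := mul_one s
    linarith
  intro x
  set z := ContinuousLinearMap.adjoint (G : X →L[ℝ] X) x with hz
  have hadj : ∀ y : X, ⟪z, y⟫ = ⟪x, (G : X → X) y⟫ := fun y =>
    ContinuousLinearMap.adjoint_inner_left (G : X →L[ℝ] X) y x
  set gx := gauge C x with hgx
  have hgx0 : 0 ≤ gx := gauge_nonneg x
  -- upper bound on each term
  have hub : ∀ y : X, ⟪z, y⟫ - (1 / 2 : ℝ) * gauge C y ^ 2 ≤ (1 / 2 : ℝ) * gx ^ 2 := by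
    intro y
    have h1 : ⟪z, y⟫ ≤ gx * gauge C y := by rw [hadj]; exact key1 x y
    nlinarith [sq_nonneg (gx - gauge C y)]
  have hbdd : BddAbove (Set.range fun y : X => ⟪z, y⟫ - (1 / 2 : ℝ) * gauge C y ^ 2) := by
    refine ⟨(1 / 2 : ℝ) * gx ^ 2, ?_⟩
    rintro _ ⟨y, rfl⟩
    exact hub y
  refine le_antisymm ?_ (ciSup_le hub)
  -- lower bound
  rcases eq_or_lt_of_le hgx0 with h0' | h0'
  · have h00 : (⟪z, (0 : X)⟫ - (1 / 2 : ℝ) * gauge C (0 : X) ^ 2 : ℝ) = 0 := by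
      simp [gauge_zero]
    have := le_ciSup hbdd (0 : X)
    rw [h00] at this
    calc (1 / 2 : ℝ) * gx ^ 2 = 0 := by rw [← h0']; ring
      _ ≤ _ := this
  · apply le_of_forall_sub_le
    intro ε hε
    -- pick s = gx - δ with δ = min (ε / gx) (gx / 2)
    set δ := min (ε / gx) (gx / 2) with hδdef
    have hδ0 : 0 < δ := lt_min (div_pos hε h0') (by linarith)
    have hδ1 : δ ≤ ε / gx := min_le_left _ _
    have hδ2 : δ ≤ gx / 2 := min_le_right _ _
    have hs0 : 0 < gx - δ := by linarith
    obtain ⟨c, hcC, hc⟩ := key2 x (gx - δ) hs0 (by linarith)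
    have hgc : gauge C c ≤ 1 := gauge_le_one_of_mem hcC
    have hterm : gx ^ 2 - ε - (1 / 2 : ℝ) * gx ^ 2 ≤
        ⟪z, gx • c⟫ - (1 / 2 : ℝ) * gauge C (gx • c) ^ 2 := by
      have h1 : ⟪z, gx • c⟫ = gx * ⟪x, (G : X → X) c⟫ := by
        rw [real_inner_smul_right, hadj]
      have h2 : gauge C (gx • c) ≤ gx := by
        have := gauge_smul_of_nonneg (s := C) hgx0 c
        rw [this]
        calc gx * gauge C c ≤ gx * 1 := mul_le_mul_of_nonneg_left hgc hgx0
          _ = gx := mul_one gx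
      have h3 : gx * (gx - δ) ≤ ⟪z, gx • c⟫ := by
        rw [h1]
        exact mul_le_mul_of_nonneg_left hc.le hgx0
      have h4 : gx * δ ≤ ε := by
        have := mul_le_mul_of_nonneg_left hδ1 hgx0
        rwa [mul_div_cancel₀ ε h0'.ne'] at this
      have h5 : gauge C (gx • c) ^ 2 ≤ gx ^ 2 := by
        nlinarith [gauge_nonneg (s := C) (gx • c)]
      nlinarith
    calc (1 / 2 : ℝ) * gx ^ 2 - ε ≤ gx ^ 2 - ε - (1 / 2 : ℝ) * gx ^ 2 := by ring_nf; nlinarith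
      _ ≤ ⟪z, gx • c⟫ - (1 / 2 : ℝ) * gauge C (gx • c) ^ 2 := hterm
      _ ≤ _ := le_ciSup hbdd (gx • c)
end

section
/- Let X = ℝ with the standard inner product and let γ < 0. A nonempty subset C ⊆ ℝ satisfies C = (γC)° if and only if either C = [1/(γb), b] for some b > 0, or C = (−∞, 0], or C = [0, ∞). In particular, for γ < 0 the equation C = (γC)° has infinitely many solutions. -/
open scoped Pointwise

/-- The polar of a subset `C ⊆ ℝ` (with the standard inner product `⟨x, y⟩ = xy`):
`C° = {y | y·c ≤ 1 for all c ∈ C}`. -/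
def polarSetR (C : Set ℝ) : Set ℝ :=
  {y : ℝ | ∀ c ∈ C, y * c ≤ 1}

lemma polar_smul_eq (γ : ℝ) (C : Set ℝ) :
    polarSetR (γ • C) = {y : ℝ | ∀ c ∈ C, y * (γ * c) ≤ 1} := by
  ext y
  simp only [polarSetR, Set.mem_setOf_eq]
  constructor
  · intro h c hc
    exact h (γ * c) ⟨c, hc, rfl⟩
  · rintro h _ ⟨c, hc, rfl⟩
    exact h c hc

lemma icc_solution (γ : ℝ) (hγ : γ < 0) (b : ℝ) (hb : 0 < b) :
    Set.Icc (1 / (γ * b)) b = polarSetR (γ • Set.Icc (1 / (γ * b)) b) := by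
  have hγb : γ * b < 0 := mul_neg_of_neg_of_pos hγ hb
  have ha1 : (1 / (γ * b)) * (γ * b) = 1 := one_div_mul_cancel hγb.ne
  have haneg : 1 / (γ * b) < 0 := one_div_neg.2 hγb
  rw [polar_smul_eq]
  ext y
  simp only [Set.mem_Icc, Set.mem_setOf_eq]
  constructor
  · rintro ⟨hya, hyb⟩ c ⟨hca, hcb⟩
    rcases le_or_gt 0 y with hy | hy
    · nlinarith [mul_nonneg (mul_nonneg hy (neg_nonneg.2 hγ.le)) (sub_nonneg.2 hca)]
    · nlinarith [mul_nonneg (mul_nonneg (neg_nonneg.2 hy.le) (neg_nonneg.2 hγ.le)) (sub_nonneg.2 hcb),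
        mul_nonpos_of_nonneg_of_nonpos (sub_nonneg.2 hya) hγb.le]
  · intro h
    have h1 := h (1 / (γ * b)) ⟨le_refl _, by linarith⟩
    have h2 := h b ⟨by linarith, le_refl _⟩
    constructor
    · nlinarith
    · nlinarith

lemma iic_solution (γ : ℝ) (hγ : γ < 0) :
    Set.Iic (0:ℝ) = polarSetR (γ • Set.Iic (0:ℝ)) := by
  rw [polar_smul_eq]
  ext y
  simp only [Set.mem_Iic, Set.mem_setOf_eq]
  constructor
  · intro hy c hc
    nlinarith [mul_nonneg (mul_nonneg (neg_nonneg.2 hy) (neg_nonneg.2 hγ.le)) (neg_nonneg.2 hc)]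
  · intro h
    by_contra hy
    push_neg at hy
    have hyγ : y * γ < 0 := mul_neg_of_pos_of_neg hy hγ
    have hc : 2 / (y * γ) ≤ 0 := (div_nonpos_iff.2 (Or.inl ⟨by norm_num, hyγ.le⟩))
    have heq : y * (γ * (2 / (y * γ))) = 2 := by
      linear_combination div_mul_cancel₀ (2:ℝ) hyγ.ne
    linarith [heq ▸ h _ hc]

lemma ici_solution (γ : ℝ) (hγ : γ < 0) :
    Set.Ici (0:ℝ) = polarSetR (γ • Set.Ici (0:ℝ)) := by
  rw [polar_smul_eq]
  ext y
  simp only [Set.mem_Ici, Set.mem_setOf_eq]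
  constructor
  · intro hy c hc
    have h1 : γ * c ≤ 0 := mul_nonpos_of_nonpos_of_nonneg hγ.le hc
    have := mul_nonpos_of_nonneg_of_nonpos hy h1
    linarith
  · intro h
    by_contra hy
    push_neg at hy
    have hyγ : 0 < y * γ := mul_pos_of_neg_of_neg hy hγ
    have hc : (0:ℝ) ≤ 2 / (y * γ) := by positivity
    have heq : y * (γ * (2 / (y * γ))) = 2 := by
      linear_combination div_mul_cancel₀ (2:ℝ) hyγ.ne'
    linarith [heq ▸ h _ hc]

lemma forward_dir (γ : ℝ) (hγ : γ < 0) (C : Set ℝ) (hne : C.Nonempty)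
    (hC : C = polarSetR (γ • C)) :
    (∃ b : ℝ, 0 < b ∧ C = Set.Icc (1 / (γ * b)) b) ∨
      C = Set.Iic 0 ∨ C = Set.Ici 0 := by
  have hmem : ∀ y : ℝ, y ∈ C ↔ ∀ c ∈ C, y * (γ * c) ≤ 1 := by
    intro y
    conv_lhs => rw [hC, polar_smul_eq]
    rfl
  have h0 : (0:ℝ) ∈ C := (hmem 0).2 (by intro c hc; simp)
  have hclosed : IsClosed C := by
    have hrep : C = ⋂ c ∈ C, {y : ℝ | y * (γ * c) ≤ 1} := by
      ext y
      simp only [Set.mem_iInter, Set.mem_setOf_eq]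
      exact hmem y
    rw [hrep]
    exact isClosed_biInter fun c _ =>
      isClosed_le (continuous_id.mul continuous_const) continuous_const
  have hconv : Convex ℝ C := by
    intro y1 hy1 y2 hy2 s t hs ht hst
    refine (hmem _).2 fun c hc => ?_
    have h1 := (hmem y1).1 hy1 c hc
    have h2 := (hmem y2).1 hy2 c hc
    have h3 := mul_le_mul_of_nonneg_left h1 hs
    have h4 := mul_le_mul_of_nonneg_left h2 ht
    simp only [smul_eq_mul]
    nlinarith
  have hOC : C.OrdConnected := hconv.ordConnected
  by_cases hA : BddAbove C
  · by_cases hB : BddBelow C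
    · set a := sInf C with hadef
      set b := sSup C with hbdef
      have ha_mem : a ∈ C := hclosed.csInf_mem hne hB
      have hb_mem : b ∈ C := hclosed.csSup_mem hne hA
      have hCicc : C = Set.Icc a b := by
        apply Set.Subset.antisymm
        · exact fun x hx => ⟨csInf_le hB hx, le_csSup hA hx⟩
        · exact fun x hx => hOC.out ha_mem hb_mem hx
      have ha0 : a ≤ 0 := csInf_le hB h0
      have hb0 : 0 ≤ b := le_csSup hA h0
      rcases eq_or_lt_of_le hb0 with hbz | hbpos
      · exfalso
        rcases eq_or_lt_of_le ha0 with haz | haneg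
        · -- C = {0}
          have h1 : (1:ℝ) ∈ C := by
            refine (hmem 1).2 fun c hc => ?_
            rw [hCicc] at hc
            have hcz : c = 0 := le_antisymm (hbz ▸ hc.2) (haz ▸ hc.1)
            simp [hcz]
          rw [hCicc] at h1
          have := h1.2
          rw [← hbz] at this
          linarith
        · -- a < 0, b = 0
          have hγa : 0 < γ * a := mul_pos_of_neg_of_neg hγ haneg
          have hinv : 0 < 1 / (γ * a) := by positivity
          have ha1 : (1 / (γ * a)) * (γ * a) = 1 := one_div_mul_cancel hγa.ne'
          have hmm : 1 / (γ * a) ∈ C := by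
            refine (hmem _).2 fun c hc => ?_
            have hca : a ≤ c := csInf_le hB hc
            nlinarith [mul_nonpos_of_nonpos_of_nonneg
              (mul_neg_of_pos_of_neg hinv hγ).le (sub_nonneg.2 hca)]
          rw [hCicc] at hmm
          have := hmm.2
          rw [← hbz] at this
          linarith
      · -- 0 < b : show a = 1/(γ*b)
        have hγb : γ * b < 0 := mul_neg_of_neg_of_pos hγ hbpos
        have hinv : 1 / (γ * b) < 0 := one_div_neg.2 hγb
        have ha1 : (1 / (γ * b)) * (γ * b) = 1 := one_div_mul_cancel hγb.ne
        have h1b : 1 / (γ * b) ∈ C := by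
          refine (hmem _).2 fun c hc => ?_
          have hcb : c ≤ b := le_csSup hA hc
          nlinarith [mul_nonneg (mul_pos_of_neg_of_neg hinv hγ).le (sub_nonneg.2 hcb)]
        have h2 : a * (γ * b) ≤ 1 := (hmem a).1 ha_mem b hb_mem
        have haeq : a = 1 / (γ * b) := by
          refine le_antisymm (csInf_le hB h1b) ?_
          rw [div_le_iff_of_neg hγb]
          linarith
        exact Or.inl ⟨b, hbpos, by rw [hCicc, haeq]⟩
    · -- not BddBelow : C = Iic b with b = 0
      set b := sSup C with hbdef
      have hb_mem : b ∈ C := hclosed.csSup_mem hne hA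
      have hCiic : C = Set.Iic b := by
        apply Set.Subset.antisymm
        · exact fun x hx => le_csSup hA hx
        · intro x hx
          obtain ⟨lo, hlo, hlox⟩ := not_bddBelow_iff.1 hB x
          exact hOC.out hlo hb_mem ⟨hlox.le, hx⟩
      have hb0 : 0 ≤ b := le_csSup hA h0
      rcases eq_or_lt_of_le hb0 with hbz | hbpos
      · exact Or.inr (Or.inl (by rw [hCiic, ← hbz]))
      · exfalso
        have hbγ : b * γ < 0 := mul_neg_of_pos_of_neg hbpos hγ
        have hcneg : 2 / (b * γ) < 0 := div_neg_of_pos_of_neg (by norm_num) hbγ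
        have hcmem : 2 / (b * γ) ∈ C := by
          rw [hCiic]; exact le_of_lt (lt_trans hcneg hbpos)
        have heq : b * (γ * (2 / (b * γ))) = 2 := by
          linear_combination div_mul_cancel₀ (2:ℝ) hbγ.ne
        linarith [heq ▸ (hmem b).1 hb_mem _ hcmem]
  · by_cases hB : BddBelow C
    · -- not BddAbove : C = Ici a with a = 0
      set a := sInf C with hadef
      have ha_mem : a ∈ C := hclosed.csInf_mem hne hB
      have hCici : C = Set.Ici a := by
        apply Set.Subset.antisymm
        · exact fun x hx => csInf_le hB hx
        · intro x hx
          obtain ⟨hi, hhi, hxhi⟩ := not_bddAbove_iff.1 hA x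
          exact hOC.out ha_mem hhi ⟨hx, hxhi.le⟩
      have ha0 : a ≤ 0 := csInf_le hB h0
      rcases eq_or_lt_of_le ha0 with haz | haneg
      · exact Or.inr (Or.inr (by rw [hCici, haz]))
      · exfalso
        have haγ : 0 < a * γ := mul_pos_of_neg_of_neg haneg hγ
        have hcpos : 0 < 2 / (a * γ) := by positivity
        have hcmem : 2 / (a * γ) ∈ C := by
          rw [hCici]; exact le_of_lt (lt_trans haneg hcpos)
        have heq : a * (γ * (2 / (a * γ))) = 2 := by
          linear_combination div_mul_cancel₀ (2:ℝ) haγ.ne'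
        linarith [heq ▸ (hmem a).1 ha_mem _ hcmem]
    · -- C = univ
      exfalso
      have h1 : (1:ℝ) ∈ C := by
        obtain ⟨lo, hlo, hlox⟩ := not_bddBelow_iff.1 hB 1
        obtain ⟨hi, hhi, hxhi⟩ := not_bddAbove_iff.1 hA 1
        exact hOC.out hlo hhi ⟨hlox.le, hxhi.le⟩
      have h2 : 2 / γ ∈ C := by
        obtain ⟨lo, hlo, hlox⟩ := not_bddBelow_iff.1 hB (2/γ)
        obtain ⟨hi, hhi, hxhi⟩ := not_bddAbove_iff.1 hA (2/γ)
        exact hOC.out hlo hhi ⟨hlox.le, hxhi.le⟩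
      have heq : (2 / γ) * (γ * 1) = 2 := by
        linear_combination div_mul_cancel₀ (2:ℝ) hγ.ne
      linarith [heq ▸ (hmem (2/γ)).1 h2 1 h1]


/-- For `X = ℝ` and `γ < 0`, a nonempty subset `C ⊆ ℝ` satisfies `C = (γC)°` iff
`C = [1/(γb), b]` for some `b > 0`, or `C = (−∞, 0]`, or `C = [0, ∞)`.
In particular, the equation `C = (γC)°` has infinitely many solutions. -/
theorem stmt13 (γ : ℝ) (hγ : γ < 0) :
    (∀ C : Set ℝ, C.Nonempty →
      (C = polarSetR (γ • C) ↔
        (∃ b : ℝ, 0 < b ∧ C = Set.Icc (1 / (γ * b)) b) ∨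
          C = Set.Iic 0 ∨ C = Set.Ici 0)) ∧
    {C : Set ℝ | C.Nonempty ∧ C = polarSetR (γ • C)}.Infinite := by
  constructor
  · intro C hne
    constructor
    · exact forward_dir γ hγ C hne
    · rintro (⟨b, hb, rfl⟩ | rfl | rfl)
      · exact icc_solution γ hγ b hb
      · exact iic_solution γ hγ
      · exact ici_solution γ hγ
  · apply Set.infinite_of_injective_forall_mem
      (f := fun n : ℕ => Set.Icc (1 / (γ * ((n:ℝ)+1))) ((n:ℝ)+1))
    · intro n m h
      have hs : ∀ k : ℕ, sSup (Set.Icc (1 / (γ * ((k:ℝ)+1))) ((k:ℝ)+1)) = (k:ℝ)+1 := by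
        intro k
        apply csSup_Icc
        have h1 : γ * ((k:ℝ)+1) < 0 := mul_neg_of_neg_of_pos hγ (by positivity)
        have h2 := one_div_neg.2 h1
        have h3 : (0:ℝ) ≤ (k:ℝ)+1 := by positivity
        linarith
      have h' : ((n:ℝ)+1) = ((m:ℝ)+1) := by
        rw [← hs n, ← hs m]
        exact congrArg sSup h
      have : n + 1 = m + 1 := by exact_mod_cast h'
      omega
    · intro n
      refine ⟨⟨0, ?_, ?_⟩, icc_solution γ hγ _ (by positivity)⟩
      · have : γ * ((n:ℝ)+1) < 0 := mul_neg_of_neg_of_pos hγ (by positivity)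
        exact (one_div_neg.2 this).le
      · positivity
end

section
/- Let X be a nonzero real Hilbert space and let G : X → X be a continuous and invertible linear operator. If there exists a positive definite, invertible continuous linear operator A : X → X satisfying the operator equation A = G ∘ A⁻¹ ∘ G*, then the ellipsoid C := {x ∈ X : ⟨Ax, x⟩ ≤ 1} satisfies C = (GC)°. -/
open scoped RealInnerProductSpace

/-!
Write `Q x = ⟪A x, x⟫`. For a positive invertible `A`, the polar of `{Q ≤ 1}` is
`{y | Q (A⁻¹ y) ≤ 1}`: one inclusion is `2 ⟪A u, v⟫ ≤ Q u + Q v`, the other comes from testing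
against `(2 / (1 + t)) • A⁻¹ y` with `t = Q (A⁻¹ y)`. The polar of `G C` is the preimage of `C°`
under `G*`, so `y ∈ (G C)°` iff `Q (A⁻¹ G* y) ≤ 1`, and the operator equation gives
`Q (A⁻¹ G* y) = ⟪G* y, A⁻¹ G* y⟫ = ⟪y, G A⁻¹ G* y⟫ = Q y`.
-/

section

open ContinuousLinearMap

variable {X : Type*} [NormedAddCommGroup X] [InnerProductSpace ℝ X]

def ellipsoid (A : X →L[ℝ] X) : Set X :=
  {x | ⟪A x, x⟫ ≤ 1}

theorem polarSet_image_eq_preimage_adjoint [CompleteSpace X] (G : X →L[ℝ] X) (C : Set X) :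
    polarSet (G '' C) = adjoint G ⁻¹' polarSet C := by
  ext y
  simp [polarSet, adjoint_inner_left]

theorem ContinuousLinearMap.IsPositive.two_mul_inner_le {A : X →L[ℝ] X} (hA : A.IsPositive)
    (u v : X) : 2 * ⟪A u, v⟫ ≤ ⟪A u, u⟫ + ⟪A v, v⟫ := by
  have hsub : 0 ≤ ⟪A (u - v), u - v⟫ := hA.re_inner_nonneg_left (u - v)
  have hsymm : ⟪A v, u⟫ = ⟪A u, v⟫ := by
    rw [hA.inner_left_eq_inner_right, real_inner_comm]
  rw [map_sub, inner_sub_left, inner_sub_right, inner_sub_right, hsymm] at hsub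
  linarith

theorem polarSet_ellipsoid {A : X ≃L[ℝ] X} (hA : (A : X →L[ℝ] X).IsPositive) :
    polarSet (ellipsoid (A : X →L[ℝ] X)) = A.symm ⁻¹' ellipsoid (A : X →L[ℝ] X) := by
  ext y
  obtain ⟨u, rfl⟩ := A.surjective y
  simp only [polarSet, ellipsoid, Set.mem_ofPred_eq, Set.mem_preimage,
    ContinuousLinearEquiv.coe_coe, ContinuousLinearEquiv.symm_apply_apply]
  constructor
  · intro hpolar
    set t := ⟪A u, u⟫
    have ht : 0 ≤ t := hA.re_inner_nonneg_left u
    -- `4 t ≤ (1 + t) ^ 2` puts `(2 / (1 + t)) • u` in the ellipsoid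
    have hc := hpolar ((2 / (1 + t)) • u) (by
      rw [map_smul, real_inner_smul_left, real_inner_smul_right]
      change 2 / (1 + t) * (2 / (1 + t) * t) ≤ 1
      field_simp
      nlinarith [sq_nonneg (1 - t)])
    rw [real_inner_smul_right, div_mul_eq_mul_div, div_le_one (by positivity)] at hc
    linarith
  · rintro hu c hc
    have hbound := hA.two_mul_inner_le u c
    simp only [ContinuousLinearEquiv.coe_coe] at hbound
    linarith

theorem preimage_adjoint_symm_ellipsoid [CompleteSpace X] {G A : X ≃L[ℝ] X}
    (heq : (A : X →L[ℝ] X) =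
      (G : X →L[ℝ] X) ∘L (A.symm : X →L[ℝ] X) ∘L adjoint (G : X →L[ℝ] X)) :
    adjoint (G : X →L[ℝ] X) ⁻¹' (A.symm ⁻¹' ellipsoid (A : X →L[ℝ] X)) =
      ellipsoid (A : X →L[ℝ] X) := by
  ext y
  have hAy : A y = G (A.symm (adjoint (G : X →L[ℝ] X) y)) := congr($heq y)
  simp only [ellipsoid, Set.mem_preimage, Set.mem_ofPred_eq, ContinuousLinearEquiv.coe_coe,
    ContinuousLinearEquiv.apply_symm_apply]
  rw [adjoint_inner_left, ContinuousLinearEquiv.coe_coe, ← hAy, real_inner_comm]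

end

theorem stmt14_general {X : Type*} [NormedAddCommGroup X] [InnerProductSpace ℝ X]
    [CompleteSpace X] (G A : X ≃L[ℝ] X)
    (hsa : IsSelfAdjoint (A : X →L[ℝ] X))
    (hpd : ∀ x : X, x ≠ 0 → 0 < ⟪A x, x⟫)
    (heq : (A : X →L[ℝ] X) =
      (G : X →L[ℝ] X) ∘L (A.symm : X →L[ℝ] X) ∘L
        ContinuousLinearMap.adjoint (G : X →L[ℝ] X)) :
    {x : X | ⟪A x, x⟫ ≤ 1} =
      polarSet ((G : X → X) '' {x : X | ⟪A x, x⟫ ≤ 1}) := by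
  have hA : (A : X →L[ℝ] X).IsPositive := by
    refine ⟨hsa.isSymmetric, fun x => ?_⟩
    rcases eq_or_ne x 0 with rfl | hx
    · simp [ContinuousLinearMap.reApplyInnerSelf]
    · exact (hpd x hx).le
  change ellipsoid (A : X →L[ℝ] X) =
    polarSet ((G : X →L[ℝ] X) '' ellipsoid (A : X →L[ℝ] X))
  rw [polarSet_image_eq_preimage_adjoint, polarSet_ellipsoid hA,
    preimage_adjoint_symm_ellipsoid heq]

/-- If `A` is a positive definite invertible continuous linear operator satisfying the
operator equation `A = G ∘ A⁻¹ ∘ G*`, then the ellipsoid `C = {x | ⟪Ax, x⟫ ≤ 1}`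
solves `C = (GC)°`. -/
theorem stmt14 {X : Type*} [NormedAddCommGroup X] [InnerProductSpace ℝ X]
    [CompleteSpace X] [Nontrivial X] (G A : X ≃L[ℝ] X)
    (hsa : IsSelfAdjoint (A : X →L[ℝ] X))
    (hpd : ∀ x : X, x ≠ 0 → 0 < ⟪A x, x⟫)
    (heq : (A : X →L[ℝ] X) =
      (G : X →L[ℝ] X) ∘L (A.symm : X →L[ℝ] X) ∘L
        ContinuousLinearMap.adjoint (G : X →L[ℝ] X)) :
    {x : X | ⟪A x, x⟫ ≤ 1} =
      polarSet ((G : X → X) '' {x : X | ⟪A x, x⟫ ≤ 1}) :=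
  stmt14_general G A hsa hpd heq
end

section
/- Let X be a nonzero finite-dimensional real inner product space and let G : X → X be a self-adjoint and invertible linear operator. Then the equation C = (GC)° has at least one nonempty solution, and a solution can be chosen to be a centrally symmetric ellipsoid: there exists a positive definite invertible linear operator A : X → X such that C := {x ∈ X : ⟨Ax, x⟩ ≤ 1} satisfies C = (GC)°. -/
open scoped RealInnerProductSpace

/-!
The ellipsoid is `A = |G|`. For a positive invertible `A`, the polar of `{⟪A x, x⟫ ≤ 1}` is
`{⟪y, A⁻¹ y⟫ ≤ 1}`, and for self-adjoint `G` the polar of `G C` is `G⁻¹ (C°)`. Hence `(G C)°` is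
`{⟪G y, A⁻¹ G y⟫ ≤ 1} = {⟪y, G A⁻¹ G y⟫ ≤ 1}`, and `G A⁻¹ G = A` because in an eigenbasis of `G`
both operators are diagonal, with entries `μᵢ` and `|μᵢ|`.
-/

section Polar

variable {X : Type*} [NormedAddCommGroup X] [InnerProductSpace ℝ X]

theorem LinearMap.IsSymmetric.mem_polarSet_image_iff {T : X →ₗ[ℝ] X} (hT : T.IsSymmetric)
    {C : Set X} {y : X} : y ∈ polarSet (T '' C) ↔ T y ∈ polarSet C := by
  simp only [polarSet, Set.mem_ofPred_eq, Set.forall_mem_image, hT y]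

theorem mem_polarSet_ellipsoid_iff {A : X ≃ₗ[ℝ] X} (hA : (A : X →ₗ[ℝ] X).IsPositive) {y : X} :
    y ∈ polarSet {x | ⟪A x, x⟫ ≤ 1} ↔ ⟪y, A.symm y⟫ ≤ 1 := by
  obtain ⟨z, rfl⟩ := A.surjective y
  simp only [polarSet, Set.mem_ofPred_eq, LinearEquiv.symm_apply_apply]
  constructor
  · intro h
    by_contra! hz
    set s := ⟪A z, z⟫
    have hs : √s ^ 2 = s := Real.sq_sqrt (by linarith)
    have hs1 : 1 < √s := by rwa [Real.lt_sqrt zero_le_one, one_pow]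
    -- `(√s)⁻¹ • z` lies on the boundary of the ellipsoid and pairs with `A z` to `√s > 1`.
    have := h ((√s)⁻¹ • z) (by
      simp only [map_smul, inner_smul_left, inner_smul_right, RCLike.conj_to_real]
      field_simp
      linarith)
    simp only [inner_smul_right] at this
    field_simp at this
    nlinarith
  · intro hz c hc
    -- `0 ≤ ⟪A (c - z), c - z⟫ = ⟪A c, c⟫ - 2 ⟪A z, c⟫ + ⟪A z, z⟫`
    have hsq := hA.inner_nonneg_left (c - z)
    simp only [map_sub, inner_sub_left, inner_sub_right, LinearEquiv.coe_coe] at hsq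
    have hcz : ⟪A c, z⟫ = ⟪A z, c⟫ := by
      rw [real_inner_comm]
      exact (hA.isSymmetric z c).symm
    have hcc : ⟪c, A c⟫ = ⟪A c, c⟫ := real_inner_comm _ _
    linarith

end Polar

namespace OrthonormalBasis

variable {ι X : Type*} [Fintype ι] [NormedAddCommGroup X] [InnerProductSpace ℝ X]
  (b : OrthonormalBasis ι ℝ X)

theorem inner_eq_sum_repr_mul_repr (x y : X) : ⟪x, y⟫ = ∑ i, b.repr x i * b.repr y i := by
  rw [← b.sum_inner_mul_inner]
  simp [b.repr_apply_apply, real_inner_comm]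

noncomputable def diagonalMap (d : ι → ℝ) : X →ₗ[ℝ] X where
  toFun x := b.repr.symm (WithLp.toLp 2 fun i => d i * b.repr x i)
  map_add' x y := by
    rw [← map_add]
    congr 1
    ext i
    simp [mul_add]
  map_smul' c x := by
    rw [RingHom.id_apply, ← map_smul]
    congr 1
    ext i
    simp [mul_left_comm]

@[simp]
theorem repr_diagonalMap (d : ι → ℝ) (x : X) (i : ι) :
    b.repr (b.diagonalMap d x) i = d i * b.repr x i := by
  simp [diagonalMap]

theorem inner_diagonalMap_left (d : ι → ℝ) (x y : X) :
    ⟪b.diagonalMap d x, y⟫ = ∑ i, d i * b.repr x i * b.repr y i := by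
  simp [b.inner_eq_sum_repr_mul_repr]

theorem diagonalMap_apply_diagonalMap (d e : ι → ℝ) (x : X) :
    b.diagonalMap d (b.diagonalMap e x) = b.diagonalMap (d * e) x :=
  b.repr.injective <| PiLp.ext fun i => by simp [mul_assoc]

theorem diagonalMap_one_apply (x : X) : b.diagonalMap 1 x = x :=
  b.repr.injective <| PiLp.ext fun i => by simp

theorem isSymmetric_diagonalMap (d : ι → ℝ) : (b.diagonalMap d).IsSymmetric := by
  intro x y
  rw [inner_diagonalMap_left, ← real_inner_comm x, inner_diagonalMap_left]
  exact Finset.sum_congr rfl fun i _ => by ring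

theorem isPositive_diagonalMap {d : ι → ℝ} (hd : ∀ i, 0 ≤ d i) :
    (b.diagonalMap d).IsPositive := by
  refine (LinearMap.isPositive_iff _).2 ⟨b.isSymmetric_diagonalMap d, fun x => ?_⟩
  rw [inner_diagonalMap_left]
  exact Finset.sum_nonneg fun j _ => by nlinarith [hd j, mul_self_nonneg (b.repr x j)]

theorem inner_diagonalMap_self_pos {d : ι → ℝ} (hd : ∀ i, 0 < d i) {x : X} (hx : x ≠ 0) :
    0 < ⟪b.diagonalMap d x, x⟫ := by
  obtain ⟨i, hi⟩ : ∃ i, b.repr x i ≠ 0 := by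
    by_contra! h
    exact hx (b.repr.injective (PiLp.ext fun i => by simp [h i]))
  rw [inner_diagonalMap_left]
  exact Finset.sum_pos' (fun j _ => by nlinarith [hd j, mul_self_nonneg (b.repr x j)])
    ⟨i, Finset.mem_univ i, by nlinarith [hd i, mul_self_pos.2 hi]⟩

theorem diagonalMap_comp_diagonalMap_inv {d : ι → ℝ} (hd : ∀ i, d i ≠ 0) :
    b.diagonalMap d ∘ₗ b.diagonalMap d⁻¹ = .id := by
  have hdd : d * d⁻¹ = 1 := funext fun i => mul_inv_cancel₀ (hd i)
  ext x
  simp [diagonalMap_apply_diagonalMap, hdd, diagonalMap_one_apply]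

noncomputable def diagonalEquiv (d : ι → ℝ) (hd : ∀ i, d i ≠ 0) : X ≃ₗ[ℝ] X :=
  .ofLinearMap (b.diagonalMap d) (b.diagonalMap d⁻¹) (b.diagonalMap_comp_diagonalMap_inv hd)
    (by simpa using b.diagonalMap_comp_diagonalMap_inv (d := d⁻¹) (by simpa using hd))

theorem coe_diagonalEquiv (d : ι → ℝ) (hd : ∀ i, d i ≠ 0) :
    (b.diagonalEquiv d hd : X →ₗ[ℝ] X) = b.diagonalMap d :=
  rfl

theorem diagonalEquiv_symm_apply (d : ι → ℝ) (hd : ∀ i, d i ≠ 0) (x : X) :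
    (b.diagonalEquiv d hd).symm x = b.diagonalMap d⁻¹ x :=
  rfl

theorem diagonalMap_abs_inv_conj {d : ι → ℝ} (hd : ∀ i, d i ≠ 0) (x : X) :
    b.diagonalMap d (b.diagonalMap (fun i => |d i|)⁻¹ (b.diagonalMap d x)) =
      b.diagonalMap (fun i => |d i|) x := by
  rw [b.diagonalMap_apply_diagonalMap, b.diagonalMap_apply_diagonalMap]
  congr 2
  funext i
  simp only [Pi.mul_apply, Pi.inv_apply]
  field_simp [abs_ne_zero.2 (hd i)]
  exact (sq_abs (d i)).symm

end OrthonormalBasis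

namespace LinearMap.IsSymmetric

variable {X : Type*} [NormedAddCommGroup X] [InnerProductSpace ℝ X] [FiniteDimensional ℝ X]
  {T : X →ₗ[ℝ] X}

theorem apply_eq_diagonalMap_eigenvalues (hT : T.IsSymmetric) (x : X) :
    T x = (hT.eigenvectorBasis rfl).diagonalMap (hT.eigenvalues rfl) x :=
  (hT.eigenvectorBasis rfl).repr.injective <| PiLp.ext fun i => by
    rw [OrthonormalBasis.repr_diagonalMap]
    exact hT.eigenvectorBasis_apply_self_apply rfl x i

theorem eigenvalues_ne_zero (hT : T.IsSymmetric) (hinj : Function.Injective T)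
    (i : Fin (Module.finrank ℝ X)) : hT.eigenvalues rfl i ≠ 0 := fun hi =>
  (hT.eigenvectorBasis rfl).orthonormal.ne_zero i <| (injective_iff_map_eq_zero T).1 hinj _ <| by
    simp [hT.apply_eigenvectorBasis, hi]

end LinearMap.IsSymmetric

theorem stmt15_general {X : Type*} [NormedAddCommGroup X] [InnerProductSpace ℝ X]
    [FiniteDimensional ℝ X] (G : X ≃ₗ[ℝ] X)
    (hsa : ∀ x y : X, ⟪G x, y⟫ = ⟪x, G y⟫) :
    ∃ A : X ≃ₗ[ℝ] X,
      (∀ x y : X, ⟪A x, y⟫ = ⟪x, A y⟫) ∧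
      (∀ x : X, x ≠ 0 → 0 < ⟪A x, x⟫) ∧
      {x : X | ⟪A x, x⟫ ≤ 1} =
        polarSet ((G : X → X) '' {x : X | ⟪A x, x⟫ ≤ 1}) := by
  have hG : (G : X →ₗ[ℝ] X).IsSymmetric := hsa
  set b := hG.eigenvectorBasis rfl
  set μ := hG.eigenvalues rfl
  have hμ : ∀ i, μ i ≠ 0 := hG.eigenvalues_ne_zero G.injective
  have hμabs : ∀ i, 0 < |μ i| := fun i => abs_pos.2 (hμ i)
  let A := b.diagonalEquiv (fun i => |μ i|) fun i => (hμabs i).ne'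
  have hA : (A : X →ₗ[ℝ] X).IsPositive := b.isPositive_diagonalMap fun i => (hμabs i).le
  have hGAG : ∀ y, G (A.symm (G y)) = A y := fun y => by
    simp only [← LinearEquiv.coe_coe, hG.apply_eq_diagonalMap_eigenvalues, A,
      b.diagonalEquiv_symm_apply, b.coe_diagonalEquiv]
    exact b.diagonalMap_abs_inv_conj hμ y
  refine ⟨A, hA.isSymmetric, fun x hx => b.inner_diagonalMap_self_pos hμabs hx, ?_⟩
  ext y
  refine (hG.mem_polarSet_image_iff.trans ?_).symm
  rw [mem_polarSet_ellipsoid_iff hA, LinearEquiv.coe_coe, hsa, hGAG, real_inner_comm]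
  rfl

/-- If `X` is a nonzero finite-dimensional real inner product space and `G : X → X` is a
self-adjoint invertible linear operator, then the equation `C = (GC)°` has at least one
nonempty solution, which can be chosen to be a centrally symmetric ellipsoid induced by
a positive definite invertible operator `A`. -/
theorem stmt15 {X : Type*} [NormedAddCommGroup X] [InnerProductSpace ℝ X]
    [FiniteDimensional ℝ X] [Nontrivial X] (G : X ≃ₗ[ℝ] X)
    (hsa : ∀ x y : X, ⟪G x, y⟫ = ⟪x, G y⟫) :
    ∃ A : X ≃ₗ[ℝ] X,
      (∀ x y : X, ⟪A x, y⟫ = ⟪x, A y⟫) ∧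
      (∀ x : X, x ≠ 0 → 0 < ⟪A x, x⟫) ∧
      {x : X | ⟪A x, x⟫ ≤ 1} =
        polarSet ((G : X → X) '' {x : X | ⟪A x, x⟫ ≤ 1}) :=
  stmt15_general G hsa
end

section
/- Let α₁, α₂ be two real numbers of the same sign (α₁α₂ > 0) with α₁ ≠ α₂, and let E : ℝ² → ℝ² be the semi-skew linear operator E(x₁, x₂) := (α₂x₂, −α₁x₁). Then there is no function f : ℝ² → (−∞, ∞] which is upper semicontinuous at 0, satisfies f(0) ∈ ℝ, and solves the equation f(x) = f*(Ex) for all x ∈ ℝ², where f*(x*) := sup{⟨x*, x⟩ − f(x) : x ∈ ℝ²} is the convex conjugate of f. -/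
/-!
By Fenchel–Young, `⟪E p, q⟫ ≤ f p + f q`, and `⟪E p, q⟫ = ⟪E q, M p⟫` for the diagonal map
`M = diag(-α₁/α₂, -α₂/α₁)`. Hence `f (M p) ≤ C` forces `f p = sup_q (⟪E q, M p⟫ - f q) ≤ C`:
sublevel sets of `f` are stable under `M⁻¹`. Upper semicontinuity makes some sublevel set a
neighbourhood of `0`. As `|α₁| ≠ |α₂|`, one diagonal entry of `M` has modulus `< 1`, so the
iterates of `M` bring every point of the corresponding axis into that neighbourhood, and `f` is
bounded above on the whole axis. Fenchel–Young against a nonzero point of the other axis then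
bounds a nonconstant linear function of the axis coordinate, which is absurd.
-/

open Filter Topology

/-- `⟪E p, q⟫` for the semi-skew operator `E (x₁, x₂) = (α₂ x₂, -α₁ x₁)`. -/
def semiSkewPairing (α₁ α₂ : ℝ) (p q : ℝ × ℝ) : ℝ :=
  (α₂ * p.2) * q.1 + (-(α₁ * p.1)) * q.2

def SolvesConjugateEquation (α₁ α₂ : ℝ) (f : ℝ × ℝ → EReal) : Prop :=
  ∀ p, f p = ⨆ q, (semiSkewPairing α₁ α₂ p q : EReal) - f q

lemma semiSkewPairing_scaled {α₁ α₂ : ℝ} (h₁ : α₁ ≠ 0) (h₂ : α₂ ≠ 0) (p q : ℝ × ℝ) :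
    semiSkewPairing α₁ α₂ q (-(α₁ / α₂) * p.1, -(α₂ / α₁) * p.2) =
      semiSkewPairing α₁ α₂ p q := by
  simp only [semiSkewPairing]
  field_simp
  ring

namespace SolvesConjugateEquation

variable {α₁ α₂ : ℝ} {f : ℝ × ℝ → EReal}

lemma fenchel_young (hf : SolvesConjugateEquation α₁ α₂ f) (hbot : ∀ p, f p ≠ ⊥) (p q : ℝ × ℝ) :
    (semiSkewPairing α₁ α₂ p q : EReal) ≤ f p + f q := by
  refine (EReal.sub_le_iff_le_add (.inl (hbot q)) (.inr (hbot p))).1 ?_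
  rw [hf p]
  exact le_iSup (fun q ↦ (semiSkewPairing α₁ α₂ p q : EReal) - f q) q

lemma semiSkewPairing_le (hf : SolvesConjugateEquation α₁ α₂ f) (hbot : ∀ p, f p ≠ ⊥)
    {C : ℝ} {p q : ℝ × ℝ} (hp : f p ≤ C) (hq : f q ≤ C) :
    semiSkewPairing α₁ α₂ p q ≤ C + C := by
  exact_mod_cast (hf.fenchel_young hbot p q).trans (add_le_add hp hq)

lemma le_of_forall_semiSkewPairing_le (hf : SolvesConjugateEquation α₁ α₂ f) {C : EReal}
    {p : ℝ × ℝ} (h : ∀ q, (semiSkewPairing α₁ α₂ p q : EReal) ≤ C + f q) : f p ≤ C := by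
  rw [hf p]
  exact iSup_le fun q ↦ EReal.sub_le_of_le_add (h q)

lemma le_of_le_scaled (hf : SolvesConjugateEquation α₁ α₂ f) (hbot : ∀ p, f p ≠ ⊥)
    (h₁ : α₁ ≠ 0) (h₂ : α₂ ≠ 0) {C : EReal} {p : ℝ × ℝ}
    (h : f (-(α₁ / α₂) * p.1, -(α₂ / α₁) * p.2) ≤ C) : f p ≤ C := by
  refine hf.le_of_forall_semiSkewPairing_le fun q ↦ ?_
  rw [← semiSkewPairing_scaled h₁ h₂, add_comm C]
  exact (hf.fenchel_young hbot _ _).trans (add_le_add le_rfl h)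

lemma le_of_le_pow_scaled (hf : SolvesConjugateEquation α₁ α₂ f) (hbot : ∀ p, f p ≠ ⊥)
    (h₁ : α₁ ≠ 0) (h₂ : α₂ ≠ 0) {C : EReal} (n : ℕ) {p : ℝ × ℝ}
    (h : f ((-(α₁ / α₂)) ^ n * p.1, (-(α₂ / α₁)) ^ n * p.2) ≤ C) : f p ≤ C := by
  induction n generalizing p with
  | zero => simpa using h
  | succ n ih =>
    refine ih (hf.le_of_le_scaled hbot h₁ h₂ ?_)
    simpa only [pow_succ', mul_assoc] using h

lemma le_of_tendsto_pow_scaled (hf : SolvesConjugateEquation α₁ α₂ f) (hbot : ∀ p, f p ≠ ⊥)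
    (h₁ : α₁ ≠ 0) (h₂ : α₂ ≠ 0) {C : EReal} (hC : ∀ᶠ p in 𝓝 0, f p ≤ C) {p : ℝ × ℝ}
    (hp : Tendsto (fun n : ℕ ↦ ((-(α₁ / α₂)) ^ n * p.1, (-(α₂ / α₁)) ^ n * p.2)) atTop (𝓝 0)) :
    f p ≤ C :=
  let ⟨n, hn⟩ := (hp.eventually hC).exists
  hf.le_of_le_pow_scaled hbot h₁ h₂ n hn

lemma le_on_fst_axis (hf : SolvesConjugateEquation α₁ α₂ f) (hbot : ∀ p, f p ≠ ⊥)
    (h₁ : α₁ ≠ 0) (h₂ : α₂ ≠ 0) {C : EReal} (hC : ∀ᶠ p in 𝓝 0, f p ≤ C) (h : |α₁| < |α₂|)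
    (t : ℝ) : f (t, 0) ≤ C := by
  refine hf.le_of_tendsto_pow_scaled hbot h₁ h₂ hC ?_
  have hρ : |-(α₁ / α₂)| < 1 := by rwa [abs_neg, abs_div, div_lt_one (abs_pos.2 h₂)]
  rw [← Prod.mk_zero_zero]
  simpa using
    ((tendsto_pow_atTop_nhds_zero_of_abs_lt_one hρ).mul_const t).prodMk_nhds tendsto_const_nhds

lemma le_on_snd_axis (hf : SolvesConjugateEquation α₁ α₂ f) (hbot : ∀ p, f p ≠ ⊥)
    (h₁ : α₁ ≠ 0) (h₂ : α₂ ≠ 0) {C : EReal} (hC : ∀ᶠ p in 𝓝 0, f p ≤ C) (h : |α₂| < |α₁|)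
    (s : ℝ) : f (0, s) ≤ C := by
  refine hf.le_of_tendsto_pow_scaled hbot h₁ h₂ hC ?_
  have hρ : |-(α₂ / α₁)| < 1 := by rwa [abs_neg, abs_div, div_lt_one (abs_pos.2 h₁)]
  rw [← Prod.mk_zero_zero]
  simpa using
    tendsto_const_nhds.prodMk_nhds ((tendsto_pow_atTop_nhds_zero_of_abs_lt_one hρ).mul_const s)

end SolvesConjugateEquation

lemma exists_ne_zero_smul_of_eventually {E : Type*} [AddCommGroup E] [Module ℝ E]
    [TopologicalSpace E] [ContinuousSMul ℝ E] {P : E → Prop} (hP : ∀ᶠ x in 𝓝 0, P x) (v : E) :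
    ∃ d : ℝ, d ≠ 0 ∧ P (d • v) := by
  have : Tendsto (fun d : ℝ ↦ d • v) (𝓝[≠] 0) (𝓝 0) := tendsto_nhdsWithin_of_tendsto_nhds <|
    (continuous_id.smul continuous_const).tendsto' 0 0 (zero_smul _ _)
  exact ((this.eventually hP).and self_mem_nhdsWithin).exists.imp fun _ hd ↦ ⟨hd.2, hd.1⟩

lemma not_forall_mul_le {a : ℝ} (ha : a ≠ 0) (R : ℝ) : ¬ ∀ t, a * t ≤ R := fun h ↦ by
  have := h ((R + 1) / a)
  rw [mul_div_cancel₀ _ ha] at this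
  linarith

lemma abs_ne_abs_of_mul_pos {a b : ℝ} (hab : 0 < a * b) (hne : a ≠ b) : |a| ≠ |b| := by
  intro h
  rcases abs_eq_abs.1 h with rfl | rfl
  · exact hne rfl
  · nlinarith [sq_nonneg b]

/-- Let `α₁, α₂` be nonzero real numbers of the same sign with `α₁ ≠ α₂`, and let
`E(x₁, x₂) := (α₂x₂, −α₁x₁)` be the associated semi-skew operator on `ℝ²`. Then there
is no function `f : ℝ² → (−∞, ∞]` which is upper semicontinuous at `0`, has
`f(0) ∈ ℝ`, and solves `f(x) = f*(Ex)` for all `x`, where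
`f*(x*) = sup_x (⟨x*, x⟩ − f(x))` is the convex conjugate. -/
theorem stmt18 (α₁ α₂ : ℝ) (hsign : 0 < α₁ * α₂) (hne : α₁ ≠ α₂) :
    ¬ ∃ f : ℝ × ℝ → EReal,
      (∀ p : ℝ × ℝ, f p ≠ ⊥) ∧
      UpperSemicontinuousAt f (0 : ℝ × ℝ) ∧
      (∃ r : ℝ, f 0 = (r : EReal)) ∧
      (∀ p : ℝ × ℝ, f p = ⨆ q : ℝ × ℝ,
        (((α₂ * p.2) * q.1 + (-(α₁ * p.1)) * q.2 : ℝ) : EReal) - f q) := by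
  rintro ⟨f, hbot, husc, ⟨r, hf0⟩, hf⟩
  replace hf : SolvesConjugateEquation α₁ α₂ f := hf
  obtain ⟨h₁, h₂⟩ := ne_zero_and_ne_zero_of_mul hsign.ne'
  set C : ℝ := r + 1
  have hC : ∀ᶠ p in 𝓝 0, f p ≤ C := by
    refine (husc C ?_).mono fun _ ↦ le_of_lt
    change f 0 < (C : EReal)
    exact hf0 ▸ EReal.coe_lt_coe_iff.2 (lt_add_one r)
  rcases (abs_ne_abs_of_mul_pos hsign hne).lt_or_gt with h | h
  · obtain ⟨d, hd, hfd⟩ := exists_ne_zero_smul_of_eventually hC (0, 1)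
    refine not_forall_mul_le (mul_ne_zero h₂ hd) (C + C) fun t ↦ ?_
    simpa [semiSkewPairing] using
      hf.semiSkewPairing_le hbot hfd (hf.le_on_fst_axis hbot h₁ h₂ hC h t)
  · obtain ⟨d, hd, hfd⟩ := exists_ne_zero_smul_of_eventually hC (1, 0)
    refine not_forall_mul_le (mul_ne_zero (neg_ne_zero.2 h₁) hd) (C + C) fun s ↦ ?_
    simpa [semiSkewPairing] using
      hf.semiSkewPairing_le hbot hfd (hf.le_on_snd_axis hbot h₁ h₂ hC h s)
end

section
/- Let α₁, α₂ be two real numbers of the same sign (α₁α₂ > 0) with α₁ ≠ α₂, and let G : ℝ² → ℝ² be the semi-skew linear operator G(x₁, x₂) := (α₂x₂, −α₁x₁). Then the equation C = (GC)° has no solution C ⊆ ℝ² that is bounded and contains 0 in its interior. -/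
/-!
With `B y c := ⟨y, G c⟩`, the map `T (y₁, y₂) := (a y₁, a⁻¹ y₂)`, `a := -α₁/α₂`, satisfies
`B (T y) c = B c y`, so every solution of `C = (GC)°` is `T`-invariant. As `α₁/α₂` is positive
and different from `1`, one of the eigenvalues `a`, `a⁻¹` of `T` has modulus `> 1`. A small
multiple of its eigenvector lies in `C`, and its `T`-orbit stays in `C` but is unbounded.
-/

open Set Filter Topology Module Module.End

theorem mapsTo_of_eq_polar {E : Type*} {B : E → E → ℝ} {C : Set E}
    (hC : C = {y | ∀ c ∈ C, B y c ≤ 1}) {T : E → E} (hT : ∀ y c, B (T y) c = B c y) :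
    MapsTo T C C := by
  have hmem : ∀ y, y ∈ C ↔ ∀ c ∈ C, B y c ≤ 1 := fun y => Set.ext_iff.mp hC y
  exact fun y hy => (hmem _).2 fun c hc => hT y c ▸ (hmem c).1 hc y hy

theorem exists_smul_mem_of_mem_nhds_zero {𝕜 E : Type*} [NontriviallyNormedField 𝕜]
    [AddCommGroup E] [TopologicalSpace E] [Module 𝕜 E] [ContinuousSMul 𝕜 E]
    {s : Set E} (hs : s ∈ 𝓝 0) (v : E) : ∃ t : 𝕜, t ≠ 0 ∧ t • v ∈ s := by
  have hlim : Tendsto (fun t : 𝕜 => t • v) (𝓝[≠] 0) (𝓝 0) := by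
    simpa using (tendsto_id.smul_const v).mono_left (nhdsWithin_le_nhds (a := (0 : 𝕜)))
  obtain ⟨t, hts, ht⟩ := ((hlim.eventually hs).and eventually_mem_nhdsWithin).exists
  exact ⟨t, ht, hts⟩

section Eigen

variable {𝕜 E : Type*} [NontriviallyNormedField 𝕜] [NormedAddCommGroup E] [NormedSpace 𝕜 E]
  {s : Set E} {f : End 𝕜 E} {μ : 𝕜}

theorem not_isBounded_of_hasEigenvector_mem (hf : MapsTo f s s) {v : E}
    (hv : f.HasEigenvector μ v) (hvs : v ∈ s) (hμ : 1 < ‖μ‖) : ¬ Bornology.IsBounded s := by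
  intro hb
  obtain ⟨R, hR⟩ := hb.exists_norm_le
  have hv0 : 0 < ‖v‖ := norm_pos_iff.2 hv.2
  obtain ⟨n, hn⟩ := pow_unbounded_of_one_lt (R / ‖v‖) hμ
  have horbit : μ ^ n • v ∈ s := by
    rw [← hv.pow_apply, Module.End.pow_apply]
    exact hf.iterate n hvs
  have hle := hR _ horbit
  rw [norm_smul, norm_pow] at hle
  rw [div_lt_iff₀ hv0] at hn
  linarith

theorem not_isBounded_of_mapsTo_of_hasEigenvalue (hs : s ∈ 𝓝 0) (hf : MapsTo f s s)
    (hμ : f.HasEigenvalue μ) (hμ1 : 1 < ‖μ‖) : ¬ Bornology.IsBounded s := by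
  obtain ⟨v, hv⟩ := hμ.exists_hasEigenvector
  obtain ⟨t, ht, hts⟩ := exists_smul_mem_of_mem_nhds_zero (𝕜 := 𝕜) hs v
  have htv : f.HasEigenvector μ (t • v) :=
    ⟨Submodule.smul_mem _ t hv.1, smul_ne_zero ht hv.2⟩
  exact not_isBounded_of_hasEigenvector_mem hf htv hts hμ1

end Eigen

section ProdMap

variable {𝕜 : Type*} [NormedField 𝕜]

theorem hasEigenvalue_prodMap_smul_fst (a b : 𝕜) :
    HasEigenvalue ((a • LinearMap.id).prodMap (b • LinearMap.id) : End 𝕜 (𝕜 × 𝕜)) a :=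
  hasEigenvalue_of_hasEigenvector (x := (1, 0)) ⟨mem_eigenspace_iff.2 (by simp), by simp⟩

theorem hasEigenvalue_prodMap_smul_snd (a b : 𝕜) :
    HasEigenvalue ((a • LinearMap.id).prodMap (b • LinearMap.id) : End 𝕜 (𝕜 × 𝕜)) b :=
  hasEigenvalue_of_hasEigenvector (x := (0, 1)) ⟨mem_eigenspace_iff.2 (by simp), by simp⟩

theorem exists_hasEigenvalue_prodMap_smul_inv {a : 𝕜} (ha : a ≠ 0) (ha1 : ‖a‖ ≠ 1) :
    ∃ μ, HasEigenvalue ((a • LinearMap.id).prodMap (a⁻¹ • LinearMap.id) : End 𝕜 (𝕜 × 𝕜)) μ ∧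
      1 < ‖μ‖ := by
  rcases ha1.lt_or_gt with hlt | hgt
  · refine ⟨a⁻¹, hasEigenvalue_prodMap_smul_snd a a⁻¹, ?_⟩
    rw [norm_inv]
    exact (one_lt_inv₀ (norm_pos_iff.2 ha)).2 hlt
  · exact ⟨a, hasEigenvalue_prodMap_smul_fst a a⁻¹, hgt⟩

end ProdMap

/-- Let `α₁, α₂` be nonzero real numbers of the same sign with `α₁ ≠ α₂`, and let
`G(x₁, x₂) := (α₂x₂, −α₁x₁)` be the associated semi-skew operator on `ℝ²` (with the
standard Euclidean inner product). Then the equation `C = (GC)°` has no solution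
`C ⊆ ℝ²` that is bounded and contains `0` in its interior. -/
theorem stmt19 (α₁ α₂ : ℝ) (hsign : 0 < α₁ * α₂) (hne : α₁ ≠ α₂)
    (G : ℝ × ℝ → ℝ × ℝ) (hG : ∀ p : ℝ × ℝ, G p = (α₂ * p.2, -(α₁ * p.1))) :
    ¬ ∃ C : Set (ℝ × ℝ), Bornology.IsBounded C ∧ (0 : ℝ × ℝ) ∈ interior C ∧
      C = {y : ℝ × ℝ | ∀ c ∈ C, y.1 * (G c).1 + y.2 * (G c).2 ≤ 1} := by
  rintro ⟨C, hB, h0, hC⟩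
  have hα₁ : α₁ ≠ 0 := by rintro rfl; simp at hsign
  have hα₂ : α₂ ≠ 0 := by rintro rfl; simp at hsign
  set a : ℝ := -(α₁ / α₂)
  have ha : a ≠ 0 := neg_ne_zero.2 (div_ne_zero hα₁ hα₂)
  have ha1 : ‖a‖ ≠ 1 := by
    have hpos : 0 < α₁ / α₂ := by
      rw [← mul_div_mul_right α₁ α₂ hα₂]
      exact div_pos hsign (mul_self_pos.2 hα₂)
    rw [Real.norm_eq_abs, abs_neg, abs_of_pos hpos, Ne, div_eq_one_iff_eq hα₂]
    exact hne
  obtain ⟨μ, hμ, hμ1⟩ := exists_hasEigenvalue_prodMap_smul_inv ha ha1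
  have hT : MapsTo ((a • LinearMap.id).prodMap (a⁻¹ • LinearMap.id) : End ℝ (ℝ × ℝ)) C C := by
    refine mapsTo_of_eq_polar hC fun y c => ?_
    simp only [hG, LinearMap.prodMap_apply, LinearMap.smul_apply, LinearMap.id_apply,
      smul_eq_mul, a]
    field_simp
    ring
  exact not_isBounded_of_mapsTo_of_hasEigenvalue (mem_interior_iff_mem_nhds.1 h0) hT hμ hμ1 hB
end
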